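/- Let D be a persistence diagram and δ = d_∞(D, Δ). If ε < δ/2 and D' is a persistence diagram with d_b(D, D') < ε, then |D| = |T_ε(D')|, where T_ε(D') = {p ∈ D' : d_∞(p, Δ) ≥ ε} is the ε-truncation of D' away from the diagonal. -/
import Mathlib


/-- The ℓ∞ distance on the plane. -/
def dInfty (p q : ℝ × ℝ) : ℝ := max |p.1 - q.1| |p.2 - q.2|

/-- The ℓ∞ distance from a point to the diagonal `Δ = {(x, x)}`. -/
noncomputable def diagDist (p : ℝ × ℝ) : ℝ := sInf {r : ℝ | ∃ x : ℝ, r = dInfty p (x, x)}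

/-- There is a (partial) matching between the diagrams `D` and `D'` of cost `< ε`:
matched pairs are within `ε` in the ℓ∞ distance, and unmatched points are within `ε`
of the diagonal.  This holds if and only if the bottleneck distance is `< ε`. -/
def MatchingCostLt (D D' : Finset (ℝ × ℝ)) (ε : ℝ) : Prop :=
  ∃ S : Finset ((ℝ × ℝ) × (ℝ × ℝ)),
    (∀ pq ∈ S, pq.1 ∈ D ∧ pq.2 ∈ D') ∧
    (∀ pq ∈ S, ∀ pq' ∈ S, pq.1 = pq'.1 → pq = pq') ∧
    (∀ pq ∈ S, ∀ pq' ∈ S, pq.2 = pq'.2 → pq = pq') ∧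
    (∀ pq ∈ S, dInfty pq.1 pq.2 < ε) ∧
    (∀ p ∈ D, p ∉ S.image Prod.fst → diagDist p < ε) ∧
    (∀ q ∈ D', q ∉ S.image Prod.snd → diagDist q < ε)

lemma diagDist_eq (p : ℝ × ℝ) : diagDist p = |p.2 - p.1| / 2 := by
  apply IsLeast.csInf_eq
  constructor
  · refine ⟨(p.1 + p.2) / 2, ?_⟩
    have h1 : p.1 - (p.1 + p.2) / 2 = (p.1 - p.2) / 2 := by ring
    have h2 : p.2 - (p.1 + p.2) / 2 = (p.2 - p.1) / 2 := by ring
    rw [dInfty, h1, h2, abs_div, abs_div, abs_sub_comm p.1 p.2]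
    simp [abs_of_pos]
  · rintro r ⟨x, rfl⟩
    have ht : |p.2 - p.1| ≤ |p.2 - x| + |p.1 - x| := by
      calc |p.2 - p.1| ≤ |p.2 - x| + |x - p.1| := abs_sub_le _ _ _
        _ = |p.2 - x| + |p.1 - x| := by rw [abs_sub_comm x p.1]
    have hm1 : |p.1 - x| ≤ dInfty p (x, x) := le_max_left _ _
    have hm2 : |p.2 - x| ≤ dInfty p (x, x) := le_max_right _ _
    linarith

lemma diagDist_lipschitz (p q : ℝ × ℝ) :
    diagDist p ≤ diagDist q + dInfty p q := by
  rw [diagDist_eq, diagDist_eq]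
  have h : p.2 - p.1 = (q.2 - q.1) + (p.2 - q.2) + (q.1 - p.1) := by ring
  have ht : |p.2 - p.1| ≤ |q.2 - q.1| + |p.2 - q.2| + |q.1 - p.1| := by
    rw [h]
    calc |(q.2 - q.1) + (p.2 - q.2) + (q.1 - p.1)|
        ≤ |(q.2 - q.1) + (p.2 - q.2)| + |q.1 - p.1| := abs_add_le _ _
      _ ≤ |q.2 - q.1| + |p.2 - q.2| + |q.1 - p.1| := by
          linarith [abs_add_le (q.2 - q.1) (p.2 - q.2)]
  have hm1 : |p.1 - q.1| ≤ dInfty p q := le_max_left _ _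
  have hm2 : |p.2 - q.2| ≤ dInfty p q := le_max_right _ _
  rw [abs_sub_comm q.1 p.1] at ht
  linarith

/-- If `δ = d_∞(D, Δ)`, `ε < δ/2` and the bottleneck distance between the diagrams `D` and
`D'` is `< ε`, then `|D| = |T_ε(D')|`, where `T_ε(D')` is the `ε`-truncation of `D'`,
i.e. the points of `D'` at ℓ∞ distance at least `ε` from the diagonal. -/
theorem stmt1 (D D' : Finset (ℝ × ℝ))
    (hD : ∀ p ∈ D, p.1 < p.2) (hD' : ∀ p ∈ D', p.1 < p.2)
    (δ ε : ℝ) (hδ : IsLeast {r : ℝ | ∃ p ∈ D, r = diagDist p} δ)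
    (hε : ε < δ / 2)
    (hb : MatchingCostLt D D' ε) :
    D.card = (D'.filter (fun p => ε ≤ diagDist p)).card := by
  obtain ⟨S, h1, h2, h3, h4, h5, h6⟩ := hb
  -- δ ≤ diagDist p for all p ∈ D, and δ > 0
  have hδle : ∀ p ∈ D, δ ≤ diagDist p := fun p hp => hδ.2 ⟨p, hp, rfl⟩
  obtain ⟨p₀, hp₀, hδeq⟩ := hδ.1
  have hδpos : 0 < δ := by
    rw [hδeq, diagDist_eq]
    have := hD p₀ hp₀
    rw [abs_of_pos (by linarith)]
    linarith
  -- every p ∈ D is matched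
  have hDfst : D = S.image Prod.fst := by
    apply Finset.Subset.antisymm
    · intro p hp
      by_contra hcon
      have := h5 p hp hcon
      have := hδle p hp
      linarith
    · intro p hp
      obtain ⟨pq, hpq, rfl⟩ := Finset.mem_image.mp hp
      exact (h1 pq hpq).1
  -- the filter equals the image of the matching under snd
  have hsnd : D'.filter (fun p => ε ≤ diagDist p) = S.image Prod.snd := by
    apply Finset.Subset.antisymm
    · intro q hq
      rw [Finset.mem_filter] at hq
      by_contra hcon
      have := h6 q hq.1 hcon
      linarith [hq.2]
    · intro q hq
      obtain ⟨pq, hpq, rfl⟩ := Finset.mem_image.mp hq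
      rw [Finset.mem_filter]
      refine ⟨(h1 pq hpq).2, ?_⟩
      have h₁ := hδle pq.1 (h1 pq hpq).1
      have h₂ := diagDist_lipschitz pq.1 pq.2
      have h₃ := h4 pq hpq
      linarith
  rw [hDfst, hsnd,
    Finset.card_image_of_injOn (fun a ha b hb hab => h2 a ha b hb hab),
    Finset.card_image_of_injOn (fun a ha b hb hab => h3 a ha b hb hab)]
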